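/- Let M ∈ ℝ^{m×n} be partitioned in blocks with top-left s×s block A_M, let G ∈ ℝ^{m×s}, S ∈ ℝ^{s×n} satisfy ‖M − GS‖₂ ≤ e_s, let G_A be the top s rows of G and S_A the first s columns of S. Assume: (1) σ_s(GS) > 0; (2) there is γ ≥ 1 with σ_s(G)·σ_s(S) = σ_s(GS)/γ; (3) there is β ≥ 1 with σ_s(G_A) ≥ σ_s(G)/β and σ_s(S_A) ≥ σ_s(S)/β; (4) e_s < (σ_s(M) − e_s)/(β²γ); and additionally (5) σ_{s+1}(M) < (σ_s(M) − e_s)/(β²γ) − e_s. Then A_lg, the top-left s×s block of the best rank-s approximation M_lg of M, is nonsingular. -/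

import Mathlib

open Matrix

theorem Matrix.isHermitian_transpose_mul_self {m n α : Type*} [Fintype m] [CommSemiring α]
    [StarRing α] [TrivialStar α] (A : Matrix m n α) : (Aᵀ * A).IsHermitian := by
  rw [IsHermitian, conjTranspose_eq_transpose_of_trivial, transpose_mul, transpose_transpose]

/-- `sv A k` is the `k`-th largest singular value (1-indexed) of the real matrix `A`,
computed as the `k`-th largest square root of an eigenvalue of `Aᵀ * A`. -/
noncomputable def sv {p q : ℕ} (A : Matrix (Fin p) (Fin q) ℝ) (k : ℕ) : ℝ :=
  if h : q - k < q then
    (fun i : Fin q => Real.sqrt ((Matrix.isHermitian_transpose_mul_self A).eigenvalues i))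
      (Tuple.sort (fun i : Fin q =>
        Real.sqrt ((Matrix.isHermitian_transpose_mul_self A).eigenvalues i)) ⟨q - k, h⟩)
  else 0

/-! Weyl's inequality gives `σ_s(G S) ≥ σ_s(M) - ‖M - G S‖₂ ≥ σ_s(M) - e_s`. It is proved by
Courant–Fischer: `G S` stretches the span of the first `s` right singular vectors of `M` by at
least `σ_s(M) - e_s`, and every `s`-dimensional subspace meets the span of the right singular
vectors of `G S` belonging to its `q - s + 1` smallest singular values. With (2) and (3) this gives
`‖G_A S_A x‖ ≥ σ_s(G_A) σ_s(S_A) ‖x‖ ≥ (σ_s(M) - e_s)/(β²γ) ‖x‖`. Taking a block does not increase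
the spectral norm, so `‖G_A S_A - A_lg‖₂ ≤ ‖G S - M‖₂ + ‖M - M_lg‖₂ ≤ e_s + σ_{s+1}(M)`, which by
(5) is smaller than that factor; hence `A_lg` has trivial kernel. -/

open WithLp
open scoped Matrix.Norms.L2Operator InnerProductSpace

theorem EuclideanSpace.real_norm_toLp_sq {n : Type*} [Fintype n] (v : n → ℝ) :
    ‖toLp 2 v‖ ^ 2 = v ⬝ᵥ v := by
  rw [EuclideanSpace.real_norm_sq_eq]; simp [dotProduct, sq]

theorem EuclideanSpace.real_inner_eq_dotProduct {n : Type*} [Fintype n]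
    (x y : EuclideanSpace ℝ n) : ⟪x, y⟫_ℝ = x.ofLp ⬝ᵥ y.ofLp := by
  rw [EuclideanSpace.inner_eq_star_dotProduct, star_trivial, dotProduct_comm]

namespace Matrix

theorem dotProduct_transpose_mul_self_mulVec {m n : Type*} [Fintype m] [Fintype n]
    (A : Matrix m n ℝ) (v : n → ℝ) : v ⬝ᵥ ((Aᵀ * A) *ᵥ v) = (A *ᵥ v) ⬝ᵥ (A *ᵥ v) := by
  rw [← mulVec_mulVec, dotProduct_mulVec, vecMul_transpose]

theorem transpose_mul_self_submatrix_one {m n : Type*} [Fintype m] [DecidableEq m]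
    [DecidableEq n] {e : n → m} (he : Function.Injective e) :
    ((1 : Matrix m m ℝ).submatrix id e)ᵀ * (1 : Matrix m m ℝ).submatrix id e = 1 := by
  rw [transpose_submatrix, transpose_one, ← submatrix_mul _ _ _ _ _ Function.bijective_id,
    Matrix.mul_one, submatrix_one e he]

theorem submatrix_eq_transpose_mul_mul {l m n o : Type*} [Fintype m] [Fintype n]
    [DecidableEq m] [DecidableEq n] (A : Matrix m n ℝ) (e₁ : l → m) (e₂ : o → n) :
    A.submatrix e₁ e₂
      = ((1 : Matrix m m ℝ).submatrix id e₁)ᵀ * A * (1 : Matrix n n ℝ).submatrix id e₂ := by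
  ext i j
  simp [mul_apply, one_apply]

section L2OpNorm

variable {l m n o : Type*} [Fintype l] [Fintype m] [Fintype n] [Fintype o] [DecidableEq n]

theorem norm_mulVec_le_l2_opNorm (A : Matrix m n ℝ) (v : n → ℝ) :
    ‖toLp 2 (A *ᵥ v)‖ ≤ ‖A‖ * ‖toLp 2 v‖ :=
  A.l2_opNorm_mulVec (toLp 2 v)

theorem l2_opNorm_le_of_forall (A : Matrix m n ℝ) {c : ℝ} (hc : 0 ≤ c)
    (h : ∀ v, ‖toLp 2 (A *ᵥ v)‖ ≤ c * ‖toLp 2 v‖) : ‖A‖ ≤ c :=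
  ContinuousLinearMap.opNorm_le_bound _ hc fun x => h x.ofLp

theorem l2_opNorm_transpose [DecidableEq m] (A : Matrix m n ℝ) : ‖Aᵀ‖ = ‖A‖ :=
  l2_opNorm_conjTranspose A

theorem l2_opNorm_mul_mul_le_of_le_one [DecidableEq l] [DecidableEq m] [DecidableEq o]
    {X : Matrix l m ℝ} {Y : Matrix n o ℝ} (hX : ‖X‖ ≤ 1) (hY : ‖Y‖ ≤ 1) (A : Matrix m n ℝ) :
    ‖X * A * Y‖ ≤ ‖A‖ :=
  calc ‖X * A * Y‖ ≤ ‖X‖ * ‖A‖ * ‖Y‖ :=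
        (l2_opNorm_mul _ _).trans (mul_le_mul_of_nonneg_right (l2_opNorm_mul _ _) (norm_nonneg _))
    _ ≤ 1 * ‖A‖ * 1 := by gcongr
    _ = ‖A‖ := by ring

theorem norm_mulVec_of_transpose_mul_self_eq_one {U : Matrix m n ℝ} (hU : Uᵀ * U = 1)
    (v : n → ℝ) : ‖toLp 2 (U *ᵥ v)‖ = ‖toLp 2 v‖ := by
  rw [← sq_eq_sq₀ (norm_nonneg _) (norm_nonneg _), EuclideanSpace.real_norm_toLp_sq,
    EuclideanSpace.real_norm_toLp_sq, ← dotProduct_transpose_mul_self_mulVec, hU, one_mulVec]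

theorem l2_opNorm_le_one_of_transpose_mul_self_eq_one {U : Matrix m n ℝ} (hU : Uᵀ * U = 1) :
    ‖U‖ ≤ 1 :=
  l2_opNorm_le_of_forall U zero_le_one fun v => by
    rw [norm_mulVec_of_transpose_mul_self_eq_one hU, one_mul]

theorem l2_opNorm_submatrix_le [DecidableEq l] [DecidableEq m] [DecidableEq o] (A : Matrix m n ℝ)
    {e₁ : l → m} {e₂ : o → n} (he₁ : Function.Injective e₁) (he₂ : Function.Injective e₂) :
    ‖A.submatrix e₁ e₂‖ ≤ ‖A‖ := by
  have h₁ := l2_opNorm_le_one_of_transpose_mul_self_eq_one (transpose_mul_self_submatrix_one he₁)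
  have h₂ := l2_opNorm_le_one_of_transpose_mul_self_eq_one (transpose_mul_self_submatrix_one he₂)
  rw [← l2_opNorm_transpose] at h₁
  rw [submatrix_eq_transpose_mul_mul]
  exact l2_opNorm_mul_mul_le_of_le_one h₁ h₂ A

theorem norm_submatrix_mulVec_le [DecidableEq l] [DecidableEq m] (A : Matrix m n ℝ) {e : l → m}
    (he : Function.Injective e) (v : n → ℝ) :
    ‖toLp 2 (A.submatrix e id *ᵥ v)‖ ≤ ‖toLp 2 (A *ᵥ v)‖ := by
  rw [submatrix_eq_transpose_mul_mul, submatrix_id_id, Matrix.mul_one, ← mulVec_mulVec]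
  refine (norm_mulVec_le_l2_opNorm _ _).trans (mul_le_of_le_one_left (norm_nonneg _) ?_)
  rw [l2_opNorm_transpose]
  exact l2_opNorm_le_one_of_transpose_mul_self_eq_one (transpose_mul_self_submatrix_one he)

theorem mul_norm_le_norm_diagonal_mulVec {d : n → ℝ} {c : ℝ} (hc : 0 ≤ c) (h : ∀ i, c ≤ d i)
    (v : n → ℝ) : c * ‖toLp 2 v‖ ≤ ‖toLp 2 (diagonal d *ᵥ v)‖ := by
  refine (pow_le_pow_iff_left₀ (by positivity) (norm_nonneg _) two_ne_zero).mp ?_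
  rw [mul_pow, EuclideanSpace.real_norm_toLp_sq, EuclideanSpace.real_norm_toLp_sq, dotProduct,
    dotProduct, Finset.mul_sum]
  refine Finset.sum_le_sum fun i _ => ?_
  rw [mulVec_diagonal]
  nlinarith [mul_self_le_mul_self hc (h i), mul_self_nonneg (v i)]

theorem isUnit_det_of_l2_opNorm_sub_lt {X Y : Matrix n n ℝ} {c : ℝ}
    (hX : ∀ v, c * ‖toLp 2 v‖ ≤ ‖toLp 2 (X *ᵥ v)‖) (hXY : ‖X - Y‖ < c) : IsUnit Y.det := by
  rw [isUnit_iff_ne_zero]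
  intro hdet
  obtain ⟨v, hv, hYv⟩ := exists_mulVec_eq_zero_iff.mpr hdet
  have hXv : X *ᵥ v = (X - Y) *ᵥ v := by rw [sub_mulVec, hYv, sub_zero]
  have hv0 : 0 < ‖toLp 2 v‖ := norm_pos_iff.mpr (by simpa using hv)
  have := (hX v).trans (hXv ▸ norm_mulVec_le_l2_opNorm (X - Y) v)
  linarith [mul_lt_mul_of_pos_right hXY hv0]

end L2OpNorm

end Matrix

section Spectral

variable {p q : ℕ} (A : Matrix (Fin p) (Fin q) ℝ)

noncomputable def rightSingularBasis : OrthonormalBasis (Fin q) ℝ (EuclideanSpace ℝ (Fin q)) :=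
  (isHermitian_transpose_mul_self A).eigenvectorBasis

/-- `sv A k` is the entry of index `q - k` of `svUnsorted A` sorted increasingly. -/
noncomputable def svUnsorted : Fin q → ℝ :=
  fun i => √((isHermitian_transpose_mul_self A).eigenvalues i)

theorem svUnsorted_nonneg (i : Fin q) : 0 ≤ svUnsorted A i := Real.sqrt_nonneg _

theorem transpose_mul_self_mulVec_rightSingularBasis (i : Fin q) :
    (Aᵀ * A) *ᵥ (rightSingularBasis A i).ofLp
      = svUnsorted A i ^ 2 • (rightSingularBasis A i).ofLp := by
  have h : 0 ≤ (isHermitian_transpose_mul_self A).eigenvalues i :=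
    eigenvalues_conjTranspose_mul_self_nonneg A i
  rw [svUnsorted, Real.sq_sqrt h]
  exact (isHermitian_transpose_mul_self A).mulVec_eigenvectorBasis i

theorem norm_mulVec_sq_eq_sum (x : EuclideanSpace ℝ (Fin q)) :
    ‖toLp 2 (A *ᵥ x.ofLp)‖ ^ 2 = ∑ i, svUnsorted A i ^ 2 * ⟪rightSingularBasis A i, x⟫_ℝ ^ 2 := by
  let b := rightSingularBasis A
  have h : ‖toLp 2 (A *ᵥ x.ofLp)‖ ^ 2 = ⟪x, toLp 2 ((Aᵀ * A) *ᵥ x.ofLp)⟫_ℝ := by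
    rw [EuclideanSpace.real_norm_toLp_sq, EuclideanSpace.real_inner_eq_dotProduct,
      dotProduct_transpose_mul_self_mulVec]
  rw [h, ← b.sum_inner_mul_inner]
  refine Finset.sum_congr rfl fun i _ => ?_
  have hi : ⟪b i, toLp 2 ((Aᵀ * A) *ᵥ x.ofLp)⟫_ℝ = svUnsorted A i ^ 2 * ⟪b i, x⟫_ℝ := by
    rw [EuclideanSpace.real_inner_eq_dotProduct, EuclideanSpace.real_inner_eq_dotProduct,
      ofLp_toLp, dotProduct_mulVec, ← mulVec_transpose, transpose_mul, transpose_transpose,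
      transpose_mul_self_mulVec_rightSingularBasis, smul_dotProduct, smul_eq_mul]
  rw [hi, real_inner_comm]
  ring

theorem norm_sq_eq_sum_inner_rightSingularBasis (x : EuclideanSpace ℝ (Fin q)) :
    ‖x‖ ^ 2 = ∑ i, ⟪rightSingularBasis A i, x⟫_ℝ ^ 2 := by
  simp [← (rightSingularBasis A).sum_sq_norm_inner_right x]

theorem sv_nonneg (k : ℕ) : 0 ≤ sv A k := by
  unfold sv; split_ifs <;> positivity

theorem sv_eq_svUnsorted_sort {k : ℕ} (hk : 1 ≤ k) (hkq : k ≤ q) :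
    sv A k = svUnsorted A (Tuple.sort (svUnsorted A) ⟨q - k, by omega⟩) := by
  rw [sv, dif_pos (by omega)]; rfl

theorem svUnsorted_sort_le_sv {k : ℕ} (hk : 1 ≤ k) (hkq : k ≤ q) {j : Fin q}
    (hj : (j : ℕ) ≤ q - k) : svUnsorted A (Tuple.sort (svUnsorted A) j) ≤ sv A k := by
  rw [sv_eq_svUnsorted_sort A hk hkq]
  exact Tuple.monotone_sort (svUnsorted A) (Fin.le_def.mpr hj)

theorem sv_le_svUnsorted_sort {k : ℕ} (hk : 1 ≤ k) (hkq : k ≤ q) {j : Fin q}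
    (hj : q - k ≤ (j : ℕ)) : sv A k ≤ svUnsorted A (Tuple.sort (svUnsorted A) j) := by
  rw [sv_eq_svUnsorted_sort A hk hkq]
  exact Tuple.monotone_sort (svUnsorted A) (Fin.le_def.mpr hj)

theorem svUnsorted_le_sv_one (i : Fin q) : svUnsorted A i ≤ sv A 1 := by
  simpa using svUnsorted_sort_le_sv A le_rfl i.pos
    (j := (Tuple.sort (svUnsorted A)).symm i) (by omega)

theorem sv_card_le_svUnsorted (i : Fin q) : sv A q ≤ svUnsorted A i := by
  simpa using sv_le_svUnsorted_sort A i.pos le_rfl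
    (j := (Tuple.sort (svUnsorted A)).symm i) (by omega)

theorem sv_antitone {k k' : ℕ} (hk : 1 ≤ k) (hkk' : k ≤ k') (hk'q : k' ≤ q) :
    sv A k' ≤ sv A k := by
  rw [sv_eq_svUnsorted_sort A (hk.trans hkk') hk'q]
  exact svUnsorted_sort_le_sv A hk (hkk'.trans hk'q) (by simp; omega)

theorem norm_mulVec_le_of_svUnsorted_le {x : EuclideanSpace ℝ (Fin q)} {c : ℝ} (hc : 0 ≤ c)
    (h : ∀ i, ⟪rightSingularBasis A i, x⟫_ℝ ≠ 0 → svUnsorted A i ≤ c) :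
    ‖toLp 2 (A *ᵥ x.ofLp)‖ ≤ c * ‖x‖ := by
  refine (pow_le_pow_iff_left₀ (norm_nonneg _) (by positivity) two_ne_zero).mp ?_
  rw [mul_pow, norm_mulVec_sq_eq_sum, norm_sq_eq_sum_inner_rightSingularBasis A, Finset.mul_sum]
  refine Finset.sum_le_sum fun i _ => ?_
  by_cases hi : ⟪rightSingularBasis A i, x⟫_ℝ = 0
  · simp [hi]
  · gcongr
    exacts [svUnsorted_nonneg A i, h i hi]

theorem mul_norm_le_norm_mulVec_of_le_svUnsorted {c : ℝ} (hc : 0 ≤ c)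
    (h : ∀ i, c ≤ svUnsorted A i) (x : EuclideanSpace ℝ (Fin q)) :
    c * ‖x‖ ≤ ‖toLp 2 (A *ᵥ x.ofLp)‖ := by
  refine (pow_le_pow_iff_left₀ (by positivity) (norm_nonneg _) two_ne_zero).mp ?_
  rw [mul_pow, norm_mulVec_sq_eq_sum, norm_sq_eq_sum_inner_rightSingularBasis A, Finset.mul_sum]
  exact Finset.sum_le_sum fun i _ => by gcongr; exact h i

theorem l2_opNorm_le_sv_one : ‖A‖ ≤ sv A 1 :=
  l2_opNorm_le_of_forall A (sv_nonneg A 1) fun v =>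
    norm_mulVec_le_of_svUnsorted_le A (x := toLp 2 v) (sv_nonneg A 1)
      fun i _ => svUnsorted_le_sv_one A i

theorem sv_card_mul_norm_le_norm_mulVec (v : Fin q → ℝ) :
    sv A q * ‖toLp 2 v‖ ≤ ‖toLp 2 (A *ᵥ v)‖ :=
  mul_norm_le_norm_mulVec_of_le_svUnsorted A (sv_nonneg A q) (sv_card_le_svUnsorted A) (toLp 2 v)

theorem le_sv_of_le_norm_mulVec {s : ℕ} (hs : 1 ≤ s) (V : Submodule ℝ (EuclideanSpace ℝ (Fin q)))
    (hV : s ≤ Module.finrank ℝ V) {c : ℝ} (h : ∀ x ∈ V, c * ‖x‖ ≤ ‖toLp 2 (A *ᵥ x.ofLp)‖) :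
    c ≤ sv A s := by
  have hsq : s ≤ q := hV.trans (by simpa using V.finrank_le)
  let b := rightSingularBasis A
  -- the indices of the `q - s + 1` smallest singular values
  let ι : Fin (q - s + 1) → Fin q := fun j => Tuple.sort (svUnsorted A) (Fin.castLE (by omega) j)
  have hι : Function.Injective ι := (Equiv.injective _).comp (Fin.castLE_injective _)
  let B := Submodule.span ℝ (Set.range (b ∘ ι))
  have hB : Module.finrank ℝ B = q - s + 1 := by
    rw [finrank_span_eq_card (b.orthonormal.comp ι hι).linearIndependent, Fintype.card_fin]
  obtain ⟨x, hxV, hxB, hx0⟩ : ∃ x ∈ V, x ∈ B ∧ x ≠ 0 := by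
    by_contra! hVB
    have := Submodule.finrank_add_finrank_le_of_disjoint (Submodule.disjoint_def.mpr hVB)
    rw [hB, finrank_euclideanSpace_fin] at this
    omega
  have hAx : ‖toLp 2 (A *ᵥ x.ofLp)‖ ≤ sv A s * ‖x‖ := by
    refine norm_mulVec_le_of_svUnsorted_le A (sv_nonneg A s) fun i hi => ?_
    obtain ⟨j, rfl⟩ : i ∈ Set.range ι := by
      by_contra hi'
      refine hi (Submodule.mem_orthogonal_singleton_iff_inner_right.mp ?_)
      refine Submodule.span_le.mpr ?_ hxB
      rintro _ ⟨j, rfl⟩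
      exact Submodule.mem_orthogonal_singleton_iff_inner_right.mpr
        (b.orthonormal.2 fun h => hi' ⟨j, h.symm⟩)
    exact svUnsorted_sort_le_sv A hs hsq (by simp; omega)
  exact le_of_mul_le_mul_right ((h x hxV).trans hAx) (norm_pos_iff.mpr hx0)

theorem le_sv_of_isometry {s : ℕ} (hs : 1 ≤ s) {W : Matrix (Fin q) (Fin s) ℝ} (hW : Wᵀ * W = 1)
    {c : ℝ} (h : ∀ a, c * ‖toLp 2 a‖ ≤ ‖toLp 2 ((A * W) *ᵥ a)‖) : c ≤ sv A s := by
  have hWx : ∀ x, ‖toEuclideanLin W x‖ = ‖x‖ := fun x =>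
    norm_mulVec_of_transpose_mul_self_eq_one hW x.ofLp
  refine le_sv_of_le_norm_mulVec A hs (LinearMap.range (toEuclideanLin W)) ?_ ?_
  · rw [LinearMap.finrank_range_of_inj, finrank_euclideanSpace_fin]
    refine (injective_iff_map_eq_zero _).mpr fun x hx => ?_
    rw [← norm_eq_zero, ← hWx, hx, norm_zero]
  · rintro _ ⟨a, rfl⟩
    rw [hWx]
    simpa [mulVec_mulVec] using h a.ofLp

end Spectral

def rectDiagonal (p q : ℕ) (d : ℕ → ℝ) : Matrix (Fin p) (Fin q) ℝ :=
  of fun i j => if (i : ℕ) = (j : ℕ) then d i else 0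

section RectDiagonal

variable {p q : ℕ} (d : ℕ → ℝ)

theorem rectDiagonal_sub (e : ℕ → ℝ) :
    rectDiagonal p q d - rectDiagonal p q e = rectDiagonal p q (d - e) := by
  ext i j
  simp only [rectDiagonal, Matrix.sub_apply, of_apply, Pi.sub_apply]
  split_ifs <;> ring

theorem rectDiagonal_eq_submatrix_one_mul_diagonal :
    rectDiagonal p q d
      = (1 : Matrix (Fin (p + q)) (Fin (p + q)) ℝ).submatrix
          (Fin.castLE (Nat.le_add_right p q)) (Fin.castLE (Nat.le_add_left q p))
        * diagonal fun j : Fin q => d j := by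
  ext i j
  simp only [rectDiagonal, of_apply, mul_diagonal, submatrix_apply, one_apply, Fin.ext_iff,
    Fin.val_castLE, ite_mul, one_mul, zero_mul]
  split_ifs with h <;> simp [h]

theorem l2_opNorm_rectDiagonal_le : ‖rectDiagonal p q d‖ ≤ ‖fun j : Fin q => d j‖ := by
  rw [rectDiagonal_eq_submatrix_one_mul_diagonal, ← l2_opNorm_diagonal]
  refine (l2_opNorm_mul _ _).trans (mul_le_of_le_one_left (norm_nonneg _) ?_)
  exact (l2_opNorm_submatrix_le _ (Fin.castLE_injective _) (Fin.castLE_injective _)).trans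
    (l2_opNorm_le_one_of_transpose_mul_self_eq_one (by simp))

theorem rectDiagonal_submatrix_castLE {s : ℕ} (hsp : s ≤ p) (hsq : s ≤ q) :
    (rectDiagonal p q d).submatrix (Fin.castLE hsp) (Fin.castLE hsq)
      = diagonal fun i : Fin s => d i := by
  ext i j
  simp [rectDiagonal, diagonal, Fin.ext_iff]

end RectDiagonal

section SVD

variable {p q : ℕ} (M : Matrix (Fin p) (Fin q) ℝ) {U : Matrix (Fin p) (Fin p) ℝ}
  {V : Matrix (Fin q) (Fin q) ℝ}

theorem sv_sub_l2_opNorm_le_sv {s : ℕ} (hs : 1 ≤ s) (hsp : s ≤ p) (hsq : s ≤ q)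
    (B : Matrix (Fin p) (Fin q) ℝ) (hU : Uᵀ * U = 1) (hV : Vᵀ * V = 1)
    (hSVD : M = U * rectDiagonal p q (fun k => sv M (k + 1)) * Vᵀ) :
    sv M s - ‖M - B‖ ≤ sv B s := by
  set W := V.submatrix id (Fin.castLE hsq)
  have hW : Wᵀ * W = 1 := by
    rw [transpose_submatrix, ← submatrix_mul _ _ _ _ _ Function.bijective_id, hV,
      submatrix_one _ (Fin.castLE_injective hsq)]
  have hMW : M * W
      = U * (rectDiagonal p q fun k => sv M (k + 1)).submatrix id (Fin.castLE hsq) := by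
    have hVW : Vᵀ * W = (1 : Matrix (Fin q) (Fin q) ℝ).submatrix id (Fin.castLE hsq) := by
      rw [← hV, submatrix_mul _ _ _ _ _ Function.bijective_id, submatrix_id_id]
    conv_lhs => rw [hSVD]
    rw [Matrix.mul_assoc, hVW]
    ext i j
    simp [mul_apply, one_apply]
  refine le_sv_of_isometry B hs hW fun a => ?_
  have hM : sv M s * ‖toLp 2 a‖ ≤ ‖toLp 2 ((M * W) *ᵥ a)‖ := by
    rw [hMW, ← mulVec_mulVec, norm_mulVec_of_transpose_mul_self_eq_one hU]
    refine le_trans ?_ (norm_submatrix_mulVec_le _ (Fin.castLE_injective hsp) a)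
    rw [submatrix_submatrix, Function.id_comp, Function.comp_id, rectDiagonal_submatrix_castLE]
    exact mul_norm_le_norm_diagonal_mulVec (sv_nonneg M s)
      (fun i => sv_antitone M (by omega) (by omega) (by omega)) a
  have hMB : ‖toLp 2 (((M - B) * W) *ᵥ a)‖ ≤ ‖M - B‖ * ‖toLp 2 a‖ := by
    rw [← mulVec_mulVec, ← norm_mulVec_of_transpose_mul_self_eq_one hW a]
    exact norm_mulVec_le_l2_opNorm _ _
  have hsplit : toLp 2 ((M * W) *ᵥ a) - toLp 2 ((B * W) *ᵥ a)
      = toLp 2 (((M - B) * W) *ᵥ a) := by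
    rw [Matrix.sub_mul, sub_mulVec, WithLp.toLp_sub]
  have := norm_le_norm_add_norm_sub' (toLp 2 ((M * W) *ᵥ a)) (toLp 2 ((B * W) *ᵥ a))
  rw [hsplit] at this
  linarith

theorem l2_opNorm_sub_truncatedSVD_le (s : ℕ) (hU : Uᵀ * U = 1) (hV : Vᵀ * V = 1)
    (hSVD : M = U * rectDiagonal p q (fun k => sv M (k + 1)) * Vᵀ) :
    ‖M - U * rectDiagonal p q (fun k => if k < s then sv M (k + 1) else 0) * Vᵀ‖
      ≤ sv M (s + 1) := by
  have hres : M - U * rectDiagonal p q (fun k => if k < s then sv M (k + 1) else 0) * Vᵀ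
      = U * rectDiagonal p q (fun k => if k < s then 0 else sv M (k + 1)) * Vᵀ := by
    nth_rewrite 1 [hSVD]
    rw [← Matrix.sub_mul, ← Matrix.mul_sub, rectDiagonal_sub]
    congr 3
    funext k
    simp only [Pi.sub_apply]
    split_ifs <;> ring
  have hU₁ := l2_opNorm_le_one_of_transpose_mul_self_eq_one hU
  have hV₁ := l2_opNorm_le_one_of_transpose_mul_self_eq_one hV
  rw [← l2_opNorm_transpose] at hV₁
  rw [hres]
  refine ((l2_opNorm_mul_mul_le_of_le_one hU₁ hV₁ _).trans (l2_opNorm_rectDiagonal_le _)).trans ?_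
  refine (pi_norm_le_iff_of_nonneg (sv_nonneg M _)).mpr fun j => ?_
  split_ifs with hj
  · simpa using sv_nonneg M _
  · rw [Real.norm_of_nonneg (sv_nonneg M _)]
    exact sv_antitone M (by omega) (by omega) j.isLt

end SVD

theorem stmt5_general (m n s : ℕ) (hs : 1 ≤ s)
    (M : Matrix (Fin (s + m)) (Fin (s + n)) ℝ)
    (G : Matrix (Fin (s + m)) (Fin s) ℝ) (S : Matrix (Fin s) (Fin (s + n)) ℝ)
    (es : ℝ) (hes : sv (M - G * S) 1 ≤ es)
    (GA : Matrix (Fin s) (Fin s) ℝ) (hGAdef : GA = G.submatrix (Fin.castAdd m) id)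
    (SA : Matrix (Fin s) (Fin s) ℝ) (hSAdef : SA = S.submatrix id (Fin.castAdd n))
    (γ : ℝ) (hγ : 1 ≤ γ) (h2 : sv G s * sv S s = sv (G * S) s / γ)
    (β : ℝ) (hβ : 1 ≤ β) (h3G : sv G s / β ≤ sv GA s) (h3S : sv S s / β ≤ sv SA s)
    -- the (full) SVD of M:
    (U : Matrix (Fin (s + m)) (Fin (s + m)) ℝ) (hU : Uᵀ * U = 1)
    (V : Matrix (Fin (s + n)) (Fin (s + n)) ℝ) (hV : Vᵀ * V = 1)
    (hSVD : M = U * (Matrix.of fun (i : Fin (s + m)) (j : Fin (s + n)) =>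
      if (i : ℕ) = (j : ℕ) then sv M ((i : ℕ) + 1) else 0) * Vᵀ)
    -- the best rank-s approximation of M, by truncating its SVD:
    (Mlg : Matrix (Fin (s + m)) (Fin (s + n)) ℝ)
    (hMlg : Mlg = U * (Matrix.of fun (i : Fin (s + m)) (j : Fin (s + n)) =>
      if (i : ℕ) = (j : ℕ) ∧ (i : ℕ) < s then sv M ((i : ℕ) + 1) else 0) * Vᵀ)
    (Alg : Matrix (Fin s) (Fin s) ℝ)
    (hAlg : Alg = Mlg.submatrix (Fin.castAdd m) (Fin.castAdd n))
    (h5 : sv M (s + 1) < (sv M s - es) / (β ^ 2 * γ) - es) :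
    IsUnit Alg.det := by
  have hMGS : ‖M - G * S‖ ≤ es := (l2_opNorm_le_sv_one _).trans hes
  have hweyl : sv M s - es ≤ sv (G * S) s := by
    linarith [sv_sub_l2_opNorm_le_sv M hs (by omega) (by omega) (G * S) hU hV hSVD]
  have hβ0 : 0 < β := by linarith
  have hγ0 : 0 < γ := by linarith
  have hβγ : 0 < β ^ 2 * γ := by positivity
  have hprod : (sv M s - es) / (β ^ 2 * γ) ≤ sv GA s * sv SA s :=
    calc (sv M s - es) / (β ^ 2 * γ) ≤ sv (G * S) s / (β ^ 2 * γ) := by gcongr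
      _ = sv G s / β * (sv S s / β) := by rw [div_mul_div_comm, h2, div_div]; ring
      _ ≤ sv GA s * sv SA s :=
        mul_le_mul h3G h3S (div_nonneg (sv_nonneg _ _) hβ0.le) (sv_nonneg _ _)
  have hMlg' : ‖M - Mlg‖ ≤ sv M (s + 1) := by
    simpa only [hMlg, rectDiagonal, ite_and] using l2_opNorm_sub_truncatedSVD_le M s hU hV hSVD
  have hlow (v : Fin s → ℝ) : sv GA s * sv SA s * ‖toLp 2 v‖ ≤ ‖toLp 2 ((GA * SA) *ᵥ v)‖ := by
    rw [mul_assoc, ← mulVec_mulVec]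
    exact (mul_le_mul_of_nonneg_left (sv_card_mul_norm_le_norm_mulVec SA v) (sv_nonneg _ _)).trans
      (sv_card_mul_norm_le_norm_mulVec GA _)
  have hblock : GA * SA - Alg = (G * S - Mlg).submatrix (Fin.castAdd m) (Fin.castAdd n) := by
    ext i j
    simp [hGAdef, hSAdef, hAlg, mul_apply]
  refine isUnit_det_of_l2_opNorm_sub_lt hlow ?_
  calc ‖GA * SA - Alg‖ ≤ ‖G * S - Mlg‖ := hblock ▸
        l2_opNorm_submatrix_le _ (Fin.castAdd_injective _ _) (Fin.castAdd_injective _ _)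
    _ ≤ ‖M - G * S‖ + ‖M - Mlg‖ := by
        rw [norm_sub_rev M]; exact norm_sub_le_norm_sub_add_norm_sub _ _ _
    _ < sv GA s * sv SA s := by linarith

/-- Lemma `a_lg_invertible`: under assumptions (1)–(4) of
Theorem `a_is_invertible` together with
`σ_{s+1}(M) < (σ_s(M) − e_s)/(β²γ) − e_s`, the top-left `s×s` block `A_lg` of
the best rank-`s` approximation `M_lg` of `M` (given by the truncated SVD of
`M = U Σ Vᵀ`) is nonsingular. -/
theorem stmt5 (m n s : ℕ) (hs : 1 ≤ s) (hm : 1 ≤ m) (hn : 1 ≤ n)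
    (M : Matrix (Fin (s + m)) (Fin (s + n)) ℝ)
    (G : Matrix (Fin (s + m)) (Fin s) ℝ) (S : Matrix (Fin s) (Fin (s + n)) ℝ)
    (es : ℝ) (hes : sv (M - G * S) 1 ≤ es)
    (GA : Matrix (Fin s) (Fin s) ℝ) (hGAdef : GA = G.submatrix (Fin.castAdd m) id)
    (SA : Matrix (Fin s) (Fin s) ℝ) (hSAdef : SA = S.submatrix id (Fin.castAdd n))
    (h1 : 0 < sv (G * S) s)
    (γ : ℝ) (hγ : 1 ≤ γ) (h2 : sv G s * sv S s = sv (G * S) s / γ)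
    (β : ℝ) (hβ : 1 ≤ β) (h3G : sv G s / β ≤ sv GA s) (h3S : sv S s / β ≤ sv SA s)
    (h4 : es < (sv M s - es) / (β ^ 2 * γ))
    -- the (full) SVD of M:
    (U : Matrix (Fin (s + m)) (Fin (s + m)) ℝ) (hU : Uᵀ * U = 1)
    (V : Matrix (Fin (s + n)) (Fin (s + n)) ℝ) (hV : Vᵀ * V = 1)
    (hSVD : M = U * (Matrix.of fun (i : Fin (s + m)) (j : Fin (s + n)) =>
      if (i : ℕ) = (j : ℕ) then sv M ((i : ℕ) + 1) else 0) * Vᵀ)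
    -- the best rank-s approximation of M, by truncating its SVD:
    (Mlg : Matrix (Fin (s + m)) (Fin (s + n)) ℝ)
    (hMlg : Mlg = U * (Matrix.of fun (i : Fin (s + m)) (j : Fin (s + n)) =>
      if (i : ℕ) = (j : ℕ) ∧ (i : ℕ) < s then sv M ((i : ℕ) + 1) else 0) * Vᵀ)
    (Alg : Matrix (Fin s) (Fin s) ℝ)
    (hAlg : Alg = Mlg.submatrix (Fin.castAdd m) (Fin.castAdd n))
    (h5 : sv M (s + 1) < (sv M s - es) / (β ^ 2 * γ) - es) :
    IsUnit Alg.det :=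
  stmt5_general m n s hs M G S es hes GA hGAdef SA hSAdef γ hγ h2 β hβ h3G h3S U hU V hV hSVD Mlg
    hMlg Alg hAlg h5
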